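/- For a pure bipartite state the entanglement of purification equals the entanglement entropy: if ρ = |χ⟩⟨χ| for a unit vector χ ∈ ℂ^{n₁} ⊗ ℂ^{n₂}, then E_P(ρ) = S(Tr₂ ρ), the von Neumann entropy of the reduced density matrix on ℂ^{n₁}. -/

import Mathlib

open scoped Kronecker ComplexOrder

/-- A density matrix: positive semidefinite with trace 1. -/
def IsDensityMatrix {d : Type*} [Fintype d] (ρ : Matrix d d ℂ) : Prop :=
  ρ.PosSemidef ∧ ρ.trace = 1

/-- The rank-one outer product `|ψ⟩⟨ψ|` of a vector. -/
noncomputable def outerProd {d : Type*} (ψ : d → ℂ) : Matrix d d ℂ :=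
  Matrix.vecMulVec ψ (star ψ)

/-- Partial trace over the second tensor factor. -/
noncomputable def ptrace₂ {α β : Type*} [Fintype β] (σ : Matrix (α × β) (α × β) ℂ) :
    Matrix α α ℂ :=
  Matrix.of fun i i' => ∑ j, σ (i, j) (i', j)

/-- Partial trace over the first tensor factor. -/
noncomputable def ptrace₁ {α β : Type*} [Fintype α] (σ : Matrix (α × β) (α × β) ℂ) :
    Matrix β β ℂ :=
  Matrix.of fun j j' => ∑ i, σ (i, j) (i, j')

/-- Von Neumann entropy `S(ρ) = -∑ λᵢ log λᵢ` over the eigenvalues of `ρ`. -/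
noncomputable def vnEntropy {d : Type*} [Fintype d] [DecidableEq d] (ρ : Matrix d d ℂ) : ℝ :=
  if h : ρ.IsHermitian then ∑ i, Real.negMulLog (h.eigenvalues i) else 0

/-- Partial trace over the two ancilla factors `ℂ^{m₁} ⊗ ℂ^{m₂}` of a matrix on
`(ℂ^{n₁} ⊗ ℂ^{m₁}) ⊗ (ℂ^{n₂} ⊗ ℂ^{m₂})`, giving a matrix on `ℂ^{n₁} ⊗ ℂ^{n₂}`. -/
noncomputable def ptraceAnc {n₁ m₁ n₂ m₂ : ℕ}
    (σ : Matrix ((Fin n₁ × Fin m₁) × (Fin n₂ × Fin m₂))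
      ((Fin n₁ × Fin m₁) × (Fin n₂ × Fin m₂)) ℂ) :
    Matrix (Fin n₁ × Fin n₂) (Fin n₁ × Fin n₂) ℂ :=
  Matrix.of fun p q => ∑ j₁ : Fin m₁, ∑ j₂ : Fin m₂,
    σ ((p.1, j₁), (p.2, j₂)) ((q.1, j₁), (q.2, j₂))

/-- The entanglement of purification `E_P(ρ)`: the infimum of
`S(Tr_{A₂A'₂} |ψ⟩⟨ψ|)` over all purifications `ψ` of `ρ` in
`(ℂ^{n₁} ⊗ ℂ^{m₁}) ⊗ (ℂ^{n₂} ⊗ ℂ^{m₂})`. -/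
noncomputable def entPurification {n₁ n₂ : ℕ}
    (ρ : Matrix (Fin n₁ × Fin n₂) (Fin n₁ × Fin n₂) ℂ) : ℝ :=
  sInf {x : ℝ | ∃ (m₁ m₂ : ℕ), 1 ≤ m₁ ∧ 1 ≤ m₂ ∧
    ∃ ψ : (Fin n₁ × Fin m₁) × (Fin n₂ × Fin m₂) → ℂ,
      (∑ z, ‖ψ z‖ ^ 2 = 1) ∧ ptraceAnc (outerProd ψ) = ρ ∧
      x = vnEntropy (ptrace₂ (outerProd ψ))}

/-!
If the ancilla partial trace of `|ψ⟩⟨ψ|` is the pure state `|χ⟩⟨χ|`, then `ψ`, read as a matrix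
`Ψ` from the ancillas `A'₁A'₂` to the systems `A₁A₂`, satisfies `Ψ Ψᴴ = χ χᴴ`, which forces
`Ψ = χ φᵀ` for a unit vector `φ` on the ancillas. The reduced state of `ψ` on `A₁A'₁` is then
`Tr₂ |χ⟩⟨χ| ⊗ Tr₂ |φ⟩⟨φ|`, whose entropy is `S(Tr₂ ρ) + S(Tr₂ |φ⟩⟨φ|) ≥ S(Tr₂ ρ)`, with equality
for one-dimensional ancillas.
-/

open Matrix

section Spectrum

variable {n : Type*} [Fintype n] [DecidableEq n]

open Polynomial in
theorem Matrix.IsHermitian.map_eigenvalues_eq_of_unitary_conj {𝕜 : Type*} [RCLike 𝕜]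
    {A U : Matrix n n 𝕜} (hA : A.IsHermitian) (hU : U ∈ unitary (Matrix n n 𝕜)) (v : n → ℝ)
    (h : A = U * diagonal (fun i => (v i : 𝕜)) * star U) :
    Finset.univ.val.map hA.eigenvalues = Finset.univ.val.map v := by
  have hchar : A.charpoly = ∏ i, (X - C (v i : 𝕜)) := by
    rw [h, charpoly_mul_comm, ← Matrix.mul_assoc, Unitary.star_mul_self_of_mem hU,
      Matrix.one_mul, charpoly_diagonal]
  have hroots : A.charpoly.roots = Finset.univ.val.map fun i => (v i : 𝕜) := by
    rw [hchar, roots_prod _ _ (Finset.prod_ne_zero_iff.mpr fun i _ => X_sub_C_ne_zero _)]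
    simp
  refine Multiset.map_injective (RCLike.ofReal_injective (K := 𝕜)) ?_
  rw [Multiset.map_map, Multiset.map_map]
  exact hA.roots_charpoly_eq_eigenvalues.symm.trans hroots

theorem vnEntropy_eq_of_unitary_conj {A U : Matrix n n ℂ} (hA : A.IsHermitian)
    (hU : U ∈ unitary (Matrix n n ℂ)) (v : n → ℝ)
    (h : A = U * diagonal (fun i => (v i : ℂ)) * star U) :
    vnEntropy A = ∑ i, Real.negMulLog (v i) := by
  have hsum (w : n → ℝ) :
      ∑ i, Real.negMulLog (w i) = ((Finset.univ.val.map w).map Real.negMulLog).sum := by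
    rw [Multiset.map_map]; rfl
  rw [vnEntropy, dif_pos hA, hsum, hsum v, hA.map_eigenvalues_eq_of_unitary_conj hU v h]

theorem Matrix.IsHermitian.sum_eigenvalues_eq_one {𝕜 : Type*} [RCLike 𝕜] {A : Matrix n n 𝕜}
    (hA : A.IsHermitian) (htr : A.trace = 1) : ∑ i, hA.eigenvalues i = 1 := by
  simpa using congrArg RCLike.re (hA.trace_eq_sum_eigenvalues.symm.trans htr)

theorem vnEntropy_nonneg {A : Matrix n n ℂ} (hA : A.PosSemidef) (htr : A.trace = 1) :
    0 ≤ vnEntropy A := by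
  rw [vnEntropy, dif_pos hA.isHermitian]
  refine Finset.sum_nonneg fun i _ => Real.negMulLog_nonneg (hA.eigenvalues_nonneg i) ?_
  rw [← hA.isHermitian.sum_eigenvalues_eq_one htr]
  exact Finset.single_le_sum (fun j _ => hA.eigenvalues_nonneg j) (Finset.mem_univ i)

theorem vnEntropy_eq_zero_of_unique [Unique n] {A : Matrix n n ℂ} (hA : A.IsHermitian)
    (htr : A.trace = 1) : vnEntropy A = 0 := by
  have h := hA.sum_eigenvalues_eq_one htr
  rw [Fintype.sum_unique] at h
  rw [vnEntropy, dif_pos hA, Fintype.sum_unique, h, Real.negMulLog_one]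

theorem vnEntropy_kronecker {m : Type*} [Fintype m] [DecidableEq m] {A : Matrix n n ℂ}
    {B : Matrix m m ℂ} (hA : A.IsHermitian) (hB : B.IsHermitian) (hAtr : A.trace = 1)
    (hBtr : B.trace = 1) : vnEntropy (A ⊗ₖ B) = vnEntropy A + vnEntropy B := by
  set a := hA.eigenvalues
  set b := hB.eigenvalues
  set U := (hA.eigenvectorUnitary : Matrix n n ℂ)
  set V := (hB.eigenvectorUnitary : Matrix m m ℂ)
  have hAB : (A ⊗ₖ B).IsHermitian := by
    rw [IsHermitian, conjTranspose_kronecker, hA.eq, hB.eq]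
  have hdiag : A ⊗ₖ B = U ⊗ₖ V * diagonal (fun p : n × m => ((a p.1 * b p.2 : ℝ) : ℂ))
      * star (U ⊗ₖ V) := by
    have hA' : A = U * diagonal (fun i => (a i : ℂ)) * star U := hA.spectral_theorem
    have hB' : B = V * diagonal (fun j => (b j : ℂ)) * star V := hB.spectral_theorem
    conv_lhs => rw [hA', hB']
    simp only [star_eq_conjTranspose, conjTranspose_kronecker, mul_kronecker_mul,
      diagonal_kronecker_diagonal, Complex.ofReal_mul]
  rw [vnEntropy_eq_of_unitary_conj hAB (kronecker_mem_unitary hA.eigenvectorUnitary.2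
      hB.eigenvectorUnitary.2) _ hdiag, vnEntropy, dif_pos hA, vnEntropy, dif_pos hB,
    Fintype.sum_prod_type]
  simp only [Real.negMulLog_mul, Finset.sum_add_distrib, ← Finset.sum_mul, ← Finset.mul_sum]
  have ha : ∑ i, a i = 1 := hA.sum_eigenvalues_eq_one hAtr
  have hb : ∑ j, b j = 1 := hB.sum_eigenvalues_eq_one hBtr
  rw [ha, hb, one_mul, one_mul]

end Spectrum

theorem star_dotProduct_self_eq_sum_norm_sq {𝕜 ι : Type*} [RCLike 𝕜] [Fintype ι] (v : ι → 𝕜) :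
    star v ⬝ᵥ v = ((∑ i, ‖v i‖ ^ 2 : ℝ) : 𝕜) := by
  simp [dotProduct, RCLike.conj_mul]

theorem exists_eq_vecMulVec_of_mul_conjTranspose_eq {𝕜 ι κ : Type*} [RCLike 𝕜] [Fintype ι]
    [DecidableEq ι] [Fintype κ] {Ψ : Matrix ι κ 𝕜} {χ : ι → 𝕜} (hχ : star χ ⬝ᵥ χ = 1)
    (h : Ψ * Ψᴴ = vecMulVec χ (star χ)) :
    ∃ φ : κ → 𝕜, φ ⬝ᵥ star φ = 1 ∧ Ψ = vecMulVec χ φ := by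
  -- `P` is the orthogonal projection onto `χ`, and `(1 - P) Ψ` has zero Gram matrix.
  set P := vecMulVec χ (star χ)
  have hPP : P * P = P := by rw [vecMulVec_mul_vecMulVec, hχ, one_smul]
  have hΨ : Ψ = P * Ψ := by
    have hQP : (1 - P) * P = 0 := by rw [Matrix.sub_mul, Matrix.one_mul, hPP, sub_self]
    have h0 : ((1 - P) * Ψ) * ((1 - P) * Ψ)ᴴ = 0 := by
      rw [conjTranspose_mul, Matrix.mul_assoc, ← Matrix.mul_assoc Ψ, h, ← Matrix.mul_assoc, hQP,
        Matrix.zero_mul]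
    rw [self_mul_conjTranspose_eq_zero, Matrix.sub_mul, Matrix.one_mul, sub_eq_zero] at h0
    exact h0
  refine ⟨star χ ᵥ* Ψ, ?_, by rw [vecMulVec_mul] at hΨ; exact hΨ⟩
  rw [star_vecMul, star_star, dotProduct_mulVec, vecMul_vecMul, h, vecMul_vecMulVec, hχ,
    one_smul, hχ]

theorem trace_ptrace₂ {α β : Type*} [Fintype α] [Fintype β] (σ : Matrix (α × β) (α × β) ℂ) :
    (ptrace₂ σ).trace = σ.trace := by
  simp [trace, ptrace₂, Fintype.sum_prod_type]

theorem ptrace₂_outerProd {α β : Type*} [Fintype β] (u : α × β → ℂ) :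
    ptrace₂ (outerProd u) = of (Function.curry u) * (of (Function.curry u))ᴴ := by
  ext i i'
  simp [ptrace₂, outerProd, mul_apply, vecMulVec_apply]

theorem posSemidef_ptrace₂_outerProd {α β : Type*} [Fintype α] [Fintype β] (u : α × β → ℂ) :
    (ptrace₂ (outerProd u)).PosSemidef := by
  rw [ptrace₂_outerProd]
  exact posSemidef_self_mul_conjTranspose _

theorem trace_ptrace₂_outerProd {α β : Type*} [Fintype α] [Fintype β] (u : α × β → ℂ) :
    (ptrace₂ (outerProd u)).trace = u ⬝ᵥ star u := by
  rw [trace_ptrace₂, outerProd, trace_vecMulVec]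

def systemAncillaMatrix {α₁ β₁ α₂ β₂ : Type*} (ψ : (α₁ × β₁) × (α₂ × β₂) → ℂ) :
    Matrix (α₁ × α₂) (β₁ × β₂) ℂ :=
  of fun p j => ψ ((p.1, j.1), (p.2, j.2))

theorem ptrace₂_outerProd_eq_kronecker {α₁ β₁ α₂ β₂ : Type*} [Fintype α₂] [Fintype β₂]
    {χ : α₁ × α₂ → ℂ} {φ : β₁ × β₂ → ℂ} {ψ : (α₁ × β₁) × (α₂ × β₂) → ℂ}
    (hψ : systemAncillaMatrix ψ = vecMulVec χ φ) :
    ptrace₂ (outerProd ψ) = ptrace₂ (outerProd χ) ⊗ₖ ptrace₂ (outerProd φ) := by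
  have hψ' (a₁ b₁ a₂ b₂) : ψ ((a₁, b₁), (a₂, b₂)) = χ (a₁, a₂) * φ (b₁, b₂) :=
    congrFun (congrFun hψ (a₁, a₂)) (b₁, b₂)
  ext ⟨a₁, b₁⟩ ⟨a₁', b₁'⟩
  simp only [ptrace₂, outerProd, of_apply, vecMulVec_apply, kroneckerMap_apply, Pi.star_apply,
    Fintype.sum_prod_type, hψ', Finset.sum_mul_sum, star_mul']
  refine Finset.sum_congr rfl fun a₂ _ => Finset.sum_congr rfl fun b₂ _ => ?_
  ring

theorem ptraceAnc_outerProd {n₁ m₁ n₂ m₂ : ℕ} (ψ : (Fin n₁ × Fin m₁) × (Fin n₂ × Fin m₂) → ℂ) :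
    ptraceAnc (outerProd ψ) = systemAncillaMatrix ψ * (systemAncillaMatrix ψ)ᴴ := by
  ext p q
  simp [ptraceAnc, systemAncillaMatrix, outerProd, vecMulVec_apply, mul_apply,
    Fintype.sum_prod_type]

section Purification

variable {n₁ n₂ : ℕ}

theorem exists_vnEntropy_ptrace₂_eq_add {m₁ m₂ : ℕ} {χ : Fin n₁ × Fin n₂ → ℂ}
    (hχ : star χ ⬝ᵥ χ = 1) {ψ : (Fin n₁ × Fin m₁) × (Fin n₂ × Fin m₂) → ℂ}
    (hψ : ptraceAnc (outerProd ψ) = outerProd χ) :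
    ∃ B : Matrix (Fin m₁) (Fin m₁) ℂ, B.PosSemidef ∧ B.trace = 1 ∧
      vnEntropy (ptrace₂ (outerProd ψ)) = vnEntropy (ptrace₂ (outerProd χ)) + vnEntropy B := by
  rw [ptraceAnc_outerProd] at hψ
  obtain ⟨φ, hφ, hfactor⟩ := exists_eq_vecMulVec_of_mul_conjTranspose_eq hχ hψ
  have hφtr : (ptrace₂ (outerProd φ)).trace = 1 := by rw [trace_ptrace₂_outerProd, hφ]
  have hχtr : (ptrace₂ (outerProd χ)).trace = 1 := by
    rw [trace_ptrace₂_outerProd, dotProduct_comm, hχ]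
  refine ⟨_, posSemidef_ptrace₂_outerProd φ, hφtr, ?_⟩
  rw [ptrace₂_outerProd_eq_kronecker hfactor, vnEntropy_kronecker
    (posSemidef_ptrace₂_outerProd χ).isHermitian (posSemidef_ptrace₂_outerProd φ).isHermitian
    hχtr hφtr]

theorem exists_purification_fin_one {χ : Fin n₁ × Fin n₂ → ℂ} (hχ : ∑ z, ‖χ z‖ ^ 2 = 1) :
    ∃ ψ : (Fin n₁ × Fin 1) × (Fin n₂ × Fin 1) → ℂ,
      ∑ z, ‖ψ z‖ ^ 2 = 1 ∧ ptraceAnc (outerProd ψ) = outerProd χ := by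
  refine ⟨fun z => χ (z.1.1, z.2.1), ?_, ?_⟩
  · simpa [Fintype.sum_prod_type] using hχ
  · ext p q
    simp [ptraceAnc, outerProd, vecMulVec_apply]

end Purification

/-- For a pure bipartite state the entanglement of purification equals the
entanglement entropy of the reduced density matrix. -/
theorem entPurification_of_pure {n₁ n₂ : ℕ}
    (χ : Fin n₁ × Fin n₂ → ℂ) (hχ : ∑ z, ‖χ z‖ ^ 2 = 1)
    (ρ : Matrix (Fin n₁ × Fin n₂) (Fin n₁ × Fin n₂) ℂ) (hρ : ρ = outerProd χ) :
    entPurification ρ = vnEntropy (ptrace₂ ρ) := by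
  subst hρ
  have hχ' : star χ ⬝ᵥ χ = 1 := by
    rw [star_dotProduct_self_eq_sum_norm_sq, hχ, RCLike.ofReal_one]
  refine IsLeast.csInf_eq ⟨?_, ?_⟩
  · obtain ⟨ψ, hψ1, hψ⟩ := exists_purification_fin_one hχ
    obtain ⟨B, hB, hBtr, hS⟩ := exists_vnEntropy_ptrace₂_eq_add hχ' hψ
    refine ⟨1, 1, le_rfl, le_rfl, ψ, hψ1, hψ, ?_⟩
    rw [hS, vnEntropy_eq_zero_of_unique hB.isHermitian hBtr, add_zero]
  · rintro x ⟨m₁, m₂, -, -, ψ, -, hψ, rfl⟩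
    obtain ⟨B, hB, hBtr, hS⟩ := exists_vnEntropy_ptrace₂_eq_add hχ' hψ
    rw [hS]
    linarith [vnEntropy_nonneg hB hBtr]
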